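/- arXiv:2308.06016 — 2 statements merged into one kernel-verified Lean document; each statement's English description precedes it below -/
import Mathlib

section
/- Let G_ω be an edge-weighted graph. Then the edge ideal I(G_ω) is integrally closed if and only if G_ω does not contain, as an induced subgraph, any of the following: (i) a path of length 2 whose two edges both have weight at least 2; (ii) two disjoint edges both of weight at least 2; (iii) a 3-cycle all of whose edges have weight at least 2. -/
open MvPolynomial

/-- The edge ideal of an edge-weighted graph `G` with weight function `w`. -/
noncomputable def edgeIdeal (K : Type*) [Field K] {n : ℕ}
    (G : SimpleGraph (Fin n)) (w : Sym2 (Fin n) → ℕ) :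
    Ideal (MvPolynomial (Fin n) K) :=
  Ideal.span {m | ∃ i j : Fin n, G.Adj i j ∧ m = X i ^ w s(i, j) * X j ^ w s(i, j)}

/-- The integral closure of an ideal `I`. -/
def intClosure {R : Type*} [CommRing R] (I : Ideal R) : Set R :=
  {f | ∃ k : ℕ, 0 < k ∧ ∃ c : ℕ → R,
    (∀ i ∈ Finset.Icc 1 k, c i ∈ I ^ i) ∧
    f ^ k + ∑ i ∈ Finset.Icc 1 k, c i * f ^ (k - i) = 0}

/-- An ideal is integrally closed if it equals its integral closure. -/
def IsIntClosed {R : Type*} [CommRing R] (I : Ideal R) : Prop :=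
  intClosure I = ↑I

/-- `G_ω` contains an induced path of length 2 both of whose edges have weight ≥ 2. -/
def HasBadPath3 {n : ℕ} (G : SimpleGraph (Fin n)) (w : Sym2 (Fin n) → ℕ) : Prop :=
  ∃ a b c : Fin n, a ≠ c ∧ G.Adj a b ∧ G.Adj b c ∧ ¬ G.Adj a c ∧
    2 ≤ w s(a, b) ∧ 2 ≤ w s(b, c)

/-- `G_ω` contains two induced disjoint edges both of weight ≥ 2. -/
def HasBadTwoEdges {n : ℕ} (G : SimpleGraph (Fin n)) (w : Sym2 (Fin n) → ℕ) : Prop :=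
  ∃ a b c d : Fin n, a ≠ c ∧ a ≠ d ∧ b ≠ c ∧ b ≠ d ∧
    G.Adj a b ∧ G.Adj c d ∧ ¬ G.Adj a c ∧ ¬ G.Adj a d ∧ ¬ G.Adj b c ∧ ¬ G.Adj b d ∧
    2 ≤ w s(a, b) ∧ 2 ≤ w s(c, d)

/-- `G_ω` contains a 3-cycle all of whose edges have weight ≥ 2. -/
def HasBadTriangle {n : ℕ} (G : SimpleGraph (Fin n)) (w : Sym2 (Fin n) → ℕ) : Prop :=
  ∃ a b c : Fin n, G.Adj a b ∧ G.Adj b c ∧ G.Adj a c ∧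
    2 ≤ w s(a, b) ∧ 2 ≤ w s(b, c) ∧ 2 ≤ w s(a, c)

/-!
Fix a weight vector `L : Fin n → ℕ`. The `L`-weighted order of a polynomial (the least weight of
a monomial in its support) is an additive valuation, and an equation of integral dependence
`f ^ k + ∑ cᵢ f ^ (k - i) = 0` with `cᵢ ∈ I ^ i` forces `f` to have valuation at least that of
`I`. Hence every monomial `x ^ u` of an element of the integral closure of a monomial ideal
has, for every `L`, weight at least that of some generator.

If `G_ω` contains none of the three configurations, let `x ^ u` be divisible by no generator.
Every edge inside the support of `u` then has weight `≥ 2`, so the excluded configurations force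
the support to span at most one edge `pq`, and we may take `u p < ω(pq)`. Weighting `p` by `1`
and the vertices outside the support heavily gives `u` smaller weight than every generator, so
`x ^ u` is not a monomial of an element of the integral closure.

Conversely, edges `ab` and `cd` of weight `≥ 2` as in one of the configurations give the monomial
`(x_a x_b) ^ (ω(ab) - 1) (x_c x_d) ^ (ω(cd) - 1)`: its square is divisible by
`(x_a x_b) ^ ω(ab) (x_c x_d) ^ ω(cd) ∈ I ^ 2`, but it is divisible by no generator.
-/

theorem mem_intClosure_of_pow_mem_pow {R : Type*} [CommRing R] {I : Ideal R} {f : R} {k : ℕ}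
    (hk : 0 < k) (h : f ^ k ∈ I ^ k) : f ∈ intClosure I := by
  refine ⟨k, hk, fun i => if i = k then -f ^ k else 0, fun i _ => ?_, ?_⟩
  · dsimp only
    split_ifs with hi
    · subst hi; exact neg_mem h
    · exact zero_mem _
  · simp [Finset.sum_ite_eq', Nat.one_le_of_lt hk]

theorem subset_intClosure {R : Type*} [CommRing R] (I : Ideal R) : (I : Set R) ⊆ intClosure I :=
  fun f hf => mem_intClosure_of_pow_mem_pow one_pos (by simpa using hf)

namespace AddValuation

variable {R : Type*} [CommRing R] (v : AddValuation R ℕ∞) {I : Ideal R} {γ : ℕ∞}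

theorem nsmul_le_of_mem_pow (hI : ∀ g ∈ I, γ ≤ v g) (i : ℕ) : ∀ g ∈ I ^ i, i • γ ≤ v g := by
  induction i with
  | zero => simp
  | succ i ih =>
    intro g hg
    rw [pow_succ] at hg
    refine Submodule.mul_induction_on hg (fun x hx y hy => ?_) (fun x y hx hy => ?_)
    · rw [v.map_mul, succ_nsmul]
      exact add_le_add (ih x hx) (hI y hy)
    · exact (le_min hx hy).trans (v.map_add x y)

theorem le_of_mem_intClosure (hI : ∀ g ∈ I, γ ≤ v g) {f : R} (hf : f ∈ intClosure I) :
    γ ≤ v f := by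
  obtain ⟨k, hk, c, hc, hsum⟩ := hf
  by_contra! hlt
  lift v f to ℕ using ne_top_of_lt hlt with m hm
  have hγ : ((m + 1 : ℕ) : ℕ∞) ≤ γ := by exact_mod_cast Order.add_one_le_of_lt hlt
  have hterm : ∀ i ∈ Finset.Icc 1 k, ((k * m + 1 : ℕ) : ℕ∞) ≤ v (c i * f ^ (k - i)) := by
    intro i hi
    obtain ⟨j, rfl⟩ := Nat.exists_eq_add_of_le (Finset.mem_Icc.1 hi).2
    have hci := nsmul_le_of_mem_pow v (fun g hg => hγ.trans (hI g hg)) i (c i) (hc i hi)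
    rw [v.map_mul, v.map_pow, ← hm]
    refine le_trans ?_ (add_le_add_left hci _)
    simp only [Nat.add_sub_cancel_left, nsmul_eq_mul]
    norm_cast
    nlinarith [(Finset.mem_Icc.1 hi).1]
  have hfk : v (f ^ k) = v (∑ i ∈ Finset.Icc 1 k, c i * f ^ (k - i)) := by
    rw [eq_neg_of_add_eq_zero_left hsum, v.map_neg]
  have := hfk ▸ v.map_le_sum hterm
  rw [v.map_pow, ← hm, nsmul_eq_mul] at this
  norm_cast at this
  omega

end AddValuation

namespace Finsupp

open Finsupp (single)

variable {σ : Type*}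

theorem weight_mono (w : σ → ℕ) : Monotone (weight w : (σ →₀ ℕ) → ℕ) := by
  intro d u h
  obtain ⟨e, rfl⟩ := exists_add_of_le h
  simp

theorem single_add_single_le_iff {i j : σ} (hij : i ≠ j) {a : ℕ} {u : σ →₀ ℕ} :
    single i a + single j a ≤ u ↔ a ≤ u i ∧ a ≤ u j := by
  refine ⟨fun h => ⟨by simpa [hij.symm] using h i, by simpa [hij] using h j⟩, fun ⟨hi, hj⟩ x => ?_⟩
  by_cases hxi : x = i
  · subst hxi; simpa [hij] using hi
  by_cases hxj : x = j
  · subst hxj; simpa [Ne.symm hxi] using hj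
  simp [Ne.symm hxi, Ne.symm hxj]

theorem single_add_single_add_le_two_smul (a b c d : σ) {k l : ℕ} (hk : 2 ≤ k) (hl : 2 ≤ l) :
    single a k + single b k + (single c l + single d l) ≤
      2 • (single a (k - 1) + single b (k - 1) + single c (l - 1) + single d (l - 1)) := by
  classical
  intro x
  simp only [coe_add, coe_smul, Pi.add_apply, Pi.smul_apply, smul_eq_mul, single_apply]
  split_ifs <;> omega

theorem eq_or_eq_of_single_add_single_ne_zero {a b c d x : σ} {k l : ℕ}
    (hx : (single a k + single b k + single c l + single d l) x ≠ 0) :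
    x = a ∨ x = b ∨ x = c ∨ x = d := by
  classical
  by_contra! h
  simp [h.1.symm, h.2.1.symm, h.2.2.1.symm, h.2.2.2.symm] at hx

end Finsupp

noncomputable def MvPowerSeries.weightedOrderAddValuation (σ R : Type*) [CommRing R] [IsDomain R]
    (w : σ → ℕ) : AddValuation (MvPowerSeries σ R) ℕ∞ :=
  AddValuation.of (MvPowerSeries.weightedOrder w) (MvPowerSeries.weightedOrder_zero w)
    (MvPowerSeries.weightedOrder_one w) (fun _ _ => MvPowerSeries.min_weightedOrder_le_add w)
    (MvPowerSeries.weightedOrder_mul w)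

namespace MvPolynomial

variable {σ R : Type*}

theorem exists_weight_le_of_mem_intClosure [CommRing R] [IsDomain R] {D : Set (σ →₀ ℕ)}
    {f : MvPolynomial σ R} (hf : f ∈ intClosure (Ideal.span ((fun d => monomial d (1 : R)) '' D)))
    {u : σ →₀ ℕ} (hu : u ∈ f.support) (w : σ → ℕ) :
    ∃ d ∈ D, Finsupp.weight w d ≤ Finsupp.weight w u := by
  by_contra! h
  let v := (MvPowerSeries.weightedOrderAddValuation σ R w).comap coeToMvPowerSeries.ringHom
  have hv : ∀ g : MvPolynomial σ R, v g = (g : MvPowerSeries σ R).weightedOrder w := fun _ => rfl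
  have hI : ∀ g ∈ Ideal.span ((fun d => monomial d (1 : R)) '' D),
      ((Finsupp.weight w u + 1 : ℕ) : ℕ∞) ≤ v g := by
    intro g hg
    rw [hv]
    refine MvPowerSeries.nat_le_weightedOrder w fun e he => ?_
    rw [coeff_coe]
    by_contra hne
    obtain ⟨d, hd, hde⟩ := mem_ideal_span_monomial_image.1 hg e (mem_support_iff.2 hne)
    have := Finsupp.weight_mono w hde
    have := h d hd
    omega
  have hfu : v f ≤ Finsupp.weight w u := by
    rw [hv]
    exact MvPowerSeries.weightedOrder_le w (by rwa [coeff_coe, ← mem_support_iff])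
  have := (v.le_of_mem_intClosure hI hf).trans hfu
  norm_cast at this
  omega

theorem not_isIntClosed_span_monomial [CommRing R] [Nontrivial R] {D : Set (σ →₀ ℕ)}
    {d₁ d₂ v : σ →₀ ℕ} (h₁ : d₁ ∈ D) (h₂ : d₂ ∈ D) (hle : d₁ + d₂ ≤ 2 • v)
    (hv : ∀ d ∈ D, ¬d ≤ v) : ¬IsIntClosed (Ideal.span ((fun d => monomial d (1 : R)) '' D)) := by
  intro hcl
  obtain ⟨e, he⟩ := exists_add_of_le hle
  have hsq : monomial v (1 : R) ^ 2 ∈ Ideal.span ((fun d => monomial d (1 : R)) '' D) ^ 2 := by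
    have hprod : monomial (d₁ + d₂ + e) (1 : R) = monomial d₁ 1 * monomial d₂ 1 * monomial e 1 := by
      simp only [monomial_mul, mul_one]
    rw [monomial_pow, one_pow, he, hprod, pow_two]
    exact Ideal.mul_mem_right _ _ (Ideal.mul_mem_mul (Ideal.subset_span ⟨d₁, h₁, rfl⟩)
      (Ideal.subset_span ⟨d₂, h₂, rfl⟩))
  have hmem : monomial v (1 : R) ∈ Ideal.span ((fun d => monomial d (1 : R)) '' D) := by
    rw [← SetLike.mem_coe, ← hcl]
    exact mem_intClosure_of_pow_mem_pow two_pos hsq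
  obtain ⟨d, hd, hdv⟩ := mem_ideal_span_monomial_image.1 hmem v
    (by classical simp [support_monomial])
  exact hv d hd hdv

end MvPolynomial

section Combinatorics

variable {n : ℕ} {G : SimpleGraph (Fin n)} {w : Sym2 (Fin n) → ℕ}

theorem eq_of_adj_of_adj_of_two_le_weight (hP : ¬HasBadPath3 G w) (hT : ¬HasBadTriangle G w)
    {S : Set (Fin n)} (hS : ∀ i ∈ S, ∀ j ∈ S, G.Adj i j → 2 ≤ w s(i, j)) {x y z : Fin n}
    (hx : x ∈ S) (hy : y ∈ S) (hz : z ∈ S) (hxy : G.Adj x y) (hxz : G.Adj x z) : y = z := by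
  by_contra hne
  have hyx : 2 ≤ w s(y, x) := Sym2.eq_swap ▸ hS x hx y hy hxy
  by_cases hyz : G.Adj y z
  · exact hT ⟨y, x, z, hxy.symm, hxz, hyz, hyx, hS x hx z hz hxz, hS y hy z hz hyz⟩
  · exact hP ⟨y, x, z, hne, hxy.symm, hxz, hyz, hyx, hS x hx z hz hxz⟩

theorem sym2_eq_of_adj_of_adj_of_two_le_weight (hP : ¬HasBadPath3 G w)
    (hT2 : ¬HasBadTwoEdges G w) (hT : ¬HasBadTriangle G w) {S : Set (Fin n)}
    (hS : ∀ i ∈ S, ∀ j ∈ S, G.Adj i j → 2 ≤ w s(i, j)) {p q i j : Fin n}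
    (hp : p ∈ S) (hq : q ∈ S) (hi : i ∈ S) (hj : j ∈ S) (hpq : G.Adj p q) (hij : G.Adj i j) :
    s(p, q) = s(i, j) := by
  have hstar := fun {x y z : Fin n} =>
    eq_of_adj_of_adj_of_two_le_weight hP hT hS (x := x) (y := y) (z := z)
  by_contra hne
  rw [Sym2.eq_iff] at hne
  exact hT2 ⟨p, q, i, j, by grind [SimpleGraph.Adj.symm, SimpleGraph.Adj.ne]⟩

/-- Vertices outside the support of `u` get a weight exceeding `weight L₀ u`; this settles every
edge leaving the support. -/
theorem exists_weight_lt_of_lt_on_support (hw : ∀ e ∈ G.edgeSet, 1 ≤ w e) (u : Fin n →₀ ℕ)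
    (L₀ : Fin n → ℕ) (h : ∀ i j, G.Adj i j → u i ≠ 0 → u j ≠ 0 →
      Finsupp.weight L₀ u < w s(i, j) * (L₀ i + L₀ j)) :
    ∃ L : Fin n → ℕ, ∀ i j, G.Adj i j → Finsupp.weight L u < w s(i, j) * (L i + L j) := by
  set N := Finsupp.weight L₀ u
  set L : Fin n → ℕ := fun x => if u x = 0 then N + 1 else L₀ x
  have hLu : Finsupp.weight L u = N := by
    simp only [N, Finsupp.weight_apply]
    exact Finsupp.sum_congr fun x hx => by simp [L, Finsupp.mem_support_iff.1 hx]
  refine ⟨L, fun i j hij => ?_⟩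
  have hwij := Nat.le_mul_of_pos_left (L i + L j) (hw _ (G.mem_edgeSet.2 hij))
  rw [hLu]
  by_cases hi : u i = 0
  · have : L i = N + 1 := if_pos hi
    omega
  by_cases hj : u j = 0
  · have : L j = N + 1 := if_pos hj
    omega
  simpa only [L, hi, hj, if_false] using h i j hij hi hj

theorem exists_weight_lt_of_not_covered (hw : ∀ e ∈ G.edgeSet, 1 ≤ w e)
    (hP : ¬HasBadPath3 G w) (hT2 : ¬HasBadTwoEdges G w) (hT : ¬HasBadTriangle G w)
    {u : Fin n →₀ ℕ} (hu : ∀ i j, G.Adj i j → u i < w s(i, j) ∨ u j < w s(i, j)) :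
    ∃ L : Fin n → ℕ, ∀ i j, G.Adj i j → Finsupp.weight L u < w s(i, j) * (L i + L j) := by
  have hS : ∀ i ∈ {x | u x ≠ 0}, ∀ j ∈ {x | u x ≠ 0}, G.Adj i j → 2 ≤ w s(i, j) := by
    intro i hi j hj hij
    have := hw _ (G.mem_edgeSet.2 hij)
    have := hu i j hij
    simp only [Set.mem_ofPred_eq] at hi hj
    omega
  by_cases hedge : ∃ p q, G.Adj p q ∧ u p ≠ 0 ∧ u q ≠ 0 ∧ u p < w s(p, q)
  · obtain ⟨p, q, hpq, hp, hq, hlt⟩ := hedge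
    refine exists_weight_lt_of_lt_on_support hw u (Pi.single p 1) fun i j hij hi hj => ?_
    have heq := sym2_eq_of_adj_of_adj_of_two_le_weight hP hT2 hT hS hp hq hi hj hpq hij
    rw [Finsupp.weight_single_one_apply, ← heq]
    rcases Sym2.eq_iff.1 heq with ⟨rfl, rfl⟩ | ⟨rfl, rfl⟩ <;> simpa [hpq.ne.symm] using hlt
  · refine exists_weight_lt_of_lt_on_support hw u 0 fun i j hij hi hj => ?_
    rcases hu i j hij with h | h
    · exact absurd ⟨i, j, hij, hi, hj, h⟩ hedge
    · exact absurd ⟨j, i, hij.symm, hj, hi, Sym2.eq_swap ▸ h⟩ hedge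

end Combinatorics

section EdgeIdeal

open Finsupp (single)

variable {K : Type*} [Field K] {n : ℕ} {G : SimpleGraph (Fin n)} {w : Sym2 (Fin n) → ℕ}

def edgeExponents (G : SimpleGraph (Fin n)) (w : Sym2 (Fin n) → ℕ) : Set (Fin n →₀ ℕ) :=
  {d | ∃ i j, G.Adj i j ∧ d = single i (w s(i, j)) + single j (w s(i, j))}

theorem edgeIdeal_eq_span_monomial :
    edgeIdeal K G w = Ideal.span ((fun d => monomial d (1 : K)) '' edgeExponents G w) := by
  have hgen : ∀ i j (a : ℕ), (X i ^ a * X j ^ a : MvPolynomial (Fin n) K) =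
      monomial (single i a + single j a) 1 := by
    intro i j a
    rw [X_pow_eq_monomial, X_pow_eq_monomial, monomial_mul, one_mul]
  unfold edgeIdeal edgeExponents
  congr 1
  ext m
  constructor
  · rintro ⟨i, j, hij, rfl⟩
    exact ⟨_, ⟨i, j, hij, rfl⟩, (hgen i j _).symm⟩
  · rintro ⟨d, ⟨i, j, hij, rfl⟩, rfl⟩
    exact ⟨i, j, hij, (hgen i j _).symm⟩

theorem isIntClosed_edgeIdeal (hw : ∀ e ∈ G.edgeSet, 1 ≤ w e) (hP : ¬HasBadPath3 G w)
    (hT2 : ¬HasBadTwoEdges G w) (hT : ¬HasBadTriangle G w) :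
    IsIntClosed (edgeIdeal K G w) := by
  refine Set.Subset.antisymm (fun f hf => ?_) (subset_intClosure _)
  rw [edgeIdeal_eq_span_monomial] at hf ⊢
  refine mem_ideal_span_monomial_image.2 fun u hu => ?_
  by_contra! hnot
  have hcov : ∀ i j, G.Adj i j → u i < w s(i, j) ∨ u j < w s(i, j) := by
    intro i j hij
    by_contra! h
    exact hnot _ ⟨i, j, hij, rfl⟩ ((Finsupp.single_add_single_le_iff hij.ne).2 h)
  obtain ⟨L, hL⟩ := exists_weight_lt_of_not_covered hw hP hT2 hT hcov
  obtain ⟨_, ⟨i, j, hij, rfl⟩, hle⟩ := MvPolynomial.exists_weight_le_of_mem_intClosure hf hu L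
  simp only [map_add, Finsupp.weight_single, smul_eq_mul, ← mul_add] at hle
  exact (hL i j hij).not_ge hle

theorem not_isIntClosed_of_path (hw : ∀ e ∈ G.edgeSet, 1 ≤ w e) {a b c : Fin n}
    (hab : G.Adj a b) (hbc : G.Adj b c) (hac : a ≠ c) (h₁ : 2 ≤ w s(a, b)) (h₂ : 2 ≤ w s(b, c))
    (hchord : G.Adj a c → min (w s(a, b)) (w s(b, c)) ≤ w s(a, c)) :
    ¬IsIntClosed (edgeIdeal K G w) := by
  rw [edgeIdeal_eq_span_monomial]
  refine MvPolynomial.not_isIntClosed_span_monomial ⟨a, b, hab, rfl⟩ ⟨b, c, hbc, rfl⟩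
    (Finsupp.single_add_single_add_le_two_smul a b b c h₁ h₂) ?_
  set v := single a (w s(a, b) - 1) + single b (w s(a, b) - 1) + single b (w s(b, c) - 1) +
    single c (w s(b, c) - 1)
  rintro _ ⟨i, j, hij, rfl⟩ hle
  rw [Finsupp.single_add_single_le_iff hij.ne] at hle
  have hwij : 0 < w s(i, j) := hw _ (G.mem_edgeSet.2 hij)
  have hi := Finsupp.eq_or_eq_of_single_add_single_ne_zero (hwij.trans_le hle.1).ne'
  have hj := Finsupp.eq_or_eq_of_single_add_single_ne_zero (hwij.trans_le hle.2).ne'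
  have hba : w s(b, a) = w s(a, b) := congrArg w Sym2.eq_swap
  have hcb : w s(c, b) = w s(b, c) := congrArg w Sym2.eq_swap
  have hca : w s(c, a) = w s(a, c) := congrArg w Sym2.eq_swap
  have hva : v a = w s(a, b) - 1 := by simp [v, hab.ne.symm, hac.symm]
  have hvb : v b = w s(a, b) - 1 + (w s(b, c) - 1) := by simp [v, hab.ne, hbc.ne.symm]
  have hvc : v c = w s(b, c) - 1 := by simp [v, hac, hbc.ne]
  rcases hi with hi | hi | hi | hi <;> rcases hj with hj | hj | hj | hj <;>
    rw [hi, hj] at hle hij <;>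
    simp only [hva, hvb, hvc, hba, hcb, hca] at hle
  all_goals first
    | exact hij.ne rfl
    | omega
    | (have := hchord hij; omega)
    | (have := hchord hij.symm; omega)

theorem HasBadTwoEdges.not_isIntClosed (hw : ∀ e ∈ G.edgeSet, 1 ≤ w e)
    (h : HasBadTwoEdges G w) : ¬IsIntClosed (edgeIdeal K G w) := by
  obtain ⟨a, b, c, d, hac, had, hbc, hbd, hab, hcd, hnac, hnad, hnbc, hnbd, h₁, h₂⟩ := h
  rw [edgeIdeal_eq_span_monomial]
  refine MvPolynomial.not_isIntClosed_span_monomial ⟨a, b, hab, rfl⟩ ⟨c, d, hcd, rfl⟩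
    (Finsupp.single_add_single_add_le_two_smul a b c d h₁ h₂) ?_
  set v := single a (w s(a, b) - 1) + single b (w s(a, b) - 1) + single c (w s(c, d) - 1) +
    single d (w s(c, d) - 1)
  rintro _ ⟨i, j, hij, rfl⟩ hle
  rw [Finsupp.single_add_single_le_iff hij.ne] at hle
  have hwij : 0 < w s(i, j) := hw _ (G.mem_edgeSet.2 hij)
  have hi := Finsupp.eq_or_eq_of_single_add_single_ne_zero (hwij.trans_le hle.1).ne'
  have hj := Finsupp.eq_or_eq_of_single_add_single_ne_zero (hwij.trans_le hle.2).ne'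
  have hba : w s(b, a) = w s(a, b) := congrArg w Sym2.eq_swap
  have hdc : w s(d, c) = w s(c, d) := congrArg w Sym2.eq_swap
  have hva : v a = w s(a, b) - 1 := by simp [v, hab.ne.symm, hac.symm, had.symm]
  have hvb : v b = w s(a, b) - 1 := by simp [v, hab.ne, hbc.symm, hbd.symm]
  have hvc : v c = w s(c, d) - 1 := by simp [v, hac, hbc, hcd.ne.symm]
  have hvd : v d = w s(c, d) - 1 := by simp [v, had, hbd, hcd.ne]
  rcases hi with hi | hi | hi | hi <;> rcases hj with hj | hj | hj | hj <;>
    rw [hi, hj] at hle hij <;>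
    simp only [hva, hvb, hvc, hvd, hba, hdc] at hle
  all_goals first
    | exact hij.ne rfl
    | omega
    | contradiction
    | exact absurd hij.symm ‹_›

theorem HasBadPath3.not_isIntClosed (hw : ∀ e ∈ G.edgeSet, 1 ≤ w e) (h : HasBadPath3 G w) :
    ¬IsIntClosed (edgeIdeal K G w) :=
  let ⟨_, _, _, hac, hab, hbc, hnac, h₁, h₂⟩ := h
  not_isIntClosed_of_path hw hab hbc hac h₁ h₂ (absurd · hnac)

theorem HasBadTriangle.not_isIntClosed (hw : ∀ e ∈ G.edgeSet, 1 ≤ w e)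
    (h : HasBadTriangle G w) : ¬IsIntClosed (edgeIdeal K G w) := by
  obtain ⟨a, b, c, hab, hbc, hac, h₁, h₂, h₃⟩ := h
  by_cases hmin : min (w s(a, b)) (w s(b, c)) ≤ w s(a, c)
  · exact not_isIntClosed_of_path hw hab hbc hac.ne h₁ h₂ fun _ => hmin
  · refine not_isIntClosed_of_path hw hac hbc.symm hab.ne h₃ (Sym2.eq_swap ▸ h₂) fun _ => ?_
    omega

end EdgeIdeal

/-- `I(G_ω)` is integrally closed if and only if `G_ω` contains none of the following as
an induced subgraph: a path of length 2 with both edges of weight ≥ 2, two disjoint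
edges of weight ≥ 2, or a 3-cycle with all edges of weight ≥ 2. -/
theorem edgeIdeal_intClosed_iff
    (K : Type*) [Field K] {n : ℕ} (G : SimpleGraph (Fin n))
    (w : Sym2 (Fin n) → ℕ) (hw : ∀ e ∈ G.edgeSet, 1 ≤ w e) :
    IsIntClosed (edgeIdeal K G w) ↔
      ¬ (HasBadPath3 G w ∨ HasBadTwoEdges G w ∨ HasBadTriangle G w) := by
  constructor
  · rintro hcl (h | h | h) <;> exact h.not_isIntClosed hw hcl
  · rw [not_or, not_or]
    rintro ⟨hP, hT2, hT⟩
    exact isIntClosed_edgeIdeal hw hP hT2 hT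
end

section
/- Let n = 2r be even and let a = (a_1,…,a_n) be a vector of nonnegative integers with a_{2i−1} ≥ a_{2i} for each i = 1, …, r. Suppose y = (y_1,…,y_{n−1}) is a vector of nonnegative real numbers satisfying y_1 ≤ a_1, y_{j−1} + y_j ≤ a_j for each j = 2, …, n−1, and y_{n−1} ≤ a_n. Let h = ⌈y_1 + ⋯ + y_{n−1}⌉. Then the monomial x^a = x_1^{a_1} ⋯ x_n^{a_n} is divisible by a product of h monomials from the set {x_1 x_2, x_2 x_3, …, x_{n−1} x_n}. -/
/-!
Round the partial sums `S_k = y_1 + ⋯ + y_k` up and take differences: `c_i = ⌈S_i⌉ - ⌈S_{i-1}⌉`.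
These telescope to `⌈S_{n-1}⌉`, and over any window `k < i ≤ l` they add up to
`⌈S_l⌉ - ⌈S_k⌉`, which is at most every integer bound of `S_l - S_k`. Applied to the window
`{j - 1, j}` this gives `c_{j-1} + c_j ≤ a_j`, i.e. the exponent of `x_j` in
`∏ (x_i x_{i+1})^{c_i}` is at most `a_j`.
-/

open MvPolynomial Finset

section Rounding

variable {R : Type*} [Semiring R] [LinearOrder R] [IsStrictOrderedRing R] [FloorSemiring R]

lemma Nat.ceil_sub_ceil_le {s t : R} (ht : 0 ≤ t) {b : ℕ} (h : s ≤ t + b) :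
    ⌈s⌉₊ - ⌈t⌉₊ ≤ b := by
  have := Nat.ceil_mono h
  rw [Nat.ceil_add_natCast ht] at this
  omega

variable (y : ℕ → R)

noncomputable def ceilPartialSum (k : ℕ) : ℕ := ⌈∑ j ∈ range k, y j⌉₊

noncomputable def roundedIncrement (i : ℕ) : ℕ := ceilPartialSum y (i + 1) - ceilPartialSum y i

variable {y}

lemma monotone_ceilPartialSum (hy : ∀ j, 0 ≤ y j) : Monotone (ceilPartialSum y) :=
  fun _ _ hkl => Nat.ceil_mono <|
    sum_le_sum_of_subset_of_nonneg (range_mono hkl) fun j _ _ => hy j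

lemma sum_range_roundedIncrement (hy : ∀ j, 0 ≤ y j) (k : ℕ) :
    ∑ i ∈ range k, roundedIncrement y i = ceilPartialSum y k := by
  unfold roundedIncrement
  rw [sum_range_tsub (monotone_ceilPartialSum hy)]
  simp [ceilPartialSum]

lemma sum_Ico_roundedIncrement_le (hy : ∀ j, 0 ≤ y j) {k l b : ℕ} (hkl : k ≤ l)
    (h : ∑ j ∈ Ico k l, y j ≤ b) : ∑ i ∈ Ico k l, roundedIncrement y i ≤ b := by
  have hc := sum_range_add_sum_Ico (roundedIncrement y) hkl
  rw [sum_range_roundedIncrement hy, sum_range_roundedIncrement hy] at hc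
  have hS : ∑ j ∈ range l, y j ≤ ∑ j ∈ range k, y j + b := by
    rw [← sum_range_add_sum_Ico y hkl]
    exact add_le_add_right h _
  have := Nat.ceil_sub_ceil_le (sum_nonneg fun j _ => hy j) hS
  unfold ceilPartialSum at hc
  omega

lemma roundedIncrement_le (hy : ∀ j, 0 ≤ y j) {i b : ℕ} (h : y i ≤ b) :
    roundedIncrement y i ≤ b := by
  simpa using sum_Ico_roundedIncrement_le hy (Nat.le_succ i) (by simpa using h)

lemma roundedIncrement_eq_zero (hy : ∀ j, 0 ≤ y j) {i : ℕ} (h : y i = 0) :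
    roundedIncrement y i = 0 :=
  Nat.le_zero.mp (roundedIncrement_le hy (by simp [h]))

lemma roundedIncrement_add_roundedIncrement_succ_le (hy : ∀ j, 0 ≤ y j) {i b : ℕ}
    (h : y i + y (i + 1) ≤ b) : roundedIncrement y i + roundedIncrement y (i + 1) ≤ b := by
  simpa [sum_Ico_succ_top] using
    sum_Ico_roundedIncrement_le hy (k := i) (l := i + 2) (by omega)
      (by simpa [sum_Ico_succ_top] using h)

lemma sum_Icc_roundedIncrement_indicator {m : ℕ} (hy : ∀ j ∈ Icc 1 m, 0 ≤ y j) :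
    ∑ i ∈ Icc 1 m, roundedIncrement ((Icc 1 m : Set ℕ).indicator y) i =
      ⌈∑ i ∈ Icc 1 m, y i⌉₊ := by
  have hz : ∀ j, 0 ≤ (Icc 1 m : Set ℕ).indicator y j := fun j => Set.indicator_nonneg hy j
  have hsub : Icc 1 m ⊆ range (m + 1) := fun j hj => by
    rw [mem_Icc] at hj
    exact mem_range.2 (by omega)
  rw [sum_subset hsub fun j _ hj => roundedIncrement_eq_zero hz (Set.indicator_of_notMem hj y),
    sum_range_roundedIncrement hz, ceilPartialSum, sum_indicator_subset y hsub]

end Rounding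

section Path

variable {M : Type*} [CommMonoid M] (x : ℕ → M) {c : ℕ → ℕ}

lemma prod_Icc_mul_succ_pow_eq (hc : c 0 = 0) (m : ℕ) :
    ∏ i ∈ Icc 1 m, (x i * x (i + 1)) ^ c i =
      (∏ j ∈ Icc 1 m, x j ^ (c (j - 1) + c j)) * x (m + 1) ^ c m := by
  induction m with
  | zero => simp [hc]
  | succ m ih =>
    rw [prod_Icc_succ_top (by omega), ih, prod_Icc_succ_top (by omega), Nat.add_sub_cancel,
      mul_pow, pow_add]
    ac_rfl

lemma prod_Icc_mul_succ_pow_dvd {a : ℕ → ℕ} {m : ℕ} (hc : c 0 = 0)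
    (hmid : ∀ j ∈ Icc 1 m, c (j - 1) + c j ≤ a j) (hlast : c m ≤ a (m + 1)) :
    ∏ i ∈ Icc 1 m, (x i * x (i + 1)) ^ c i ∣ ∏ j ∈ Icc 1 (m + 1), x j ^ a j := by
  rw [prod_Icc_mul_succ_pow_eq x hc, prod_Icc_succ_top (by omega)]
  exact mul_dvd_mul (prod_dvd_prod_of_dvd _ _ fun j hj => pow_dvd_pow _ (hmid j hj))
    (pow_dvd_pow _ hlast)

end Path

theorem divisible_of_even_pair_conditions_short_general
    (K : Type*) [Field K] (n : ℕ)
    (a : ℕ → ℕ) (y : ℕ → ℝ)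
    (hy0 : ∀ i ∈ Finset.Icc 1 (n - 1), 0 ≤ y i)
    (hy1 : y 1 ≤ (a 1 : ℝ))
    (hy2 : ∀ j ∈ Finset.Icc 2 (n - 1), y (j - 1) + y j ≤ (a j : ℝ))
    (hy3 : y (n - 1) ≤ (a n : ℝ)) :
    ∃ c : ℕ → ℕ,
      (∑ i ∈ Finset.Icc 1 (n - 1), c i = ⌈∑ i ∈ Finset.Icc 1 (n - 1), y i⌉₊) ∧
      (∏ i ∈ Finset.Icc 1 (n - 1), ((X i * X (i + 1) : MvPolynomial ℕ K) ^ c i)) ∣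
        ∏ i ∈ Finset.Icc 1 n, (X i : MvPolynomial ℕ K) ^ a i := by
  rcases n with _ | m
  · exact ⟨0, by simp, by simp⟩
  simp only [Nat.add_sub_cancel] at hy0 hy2 hy3 ⊢
  -- Truncating `y` to the edges `1, …, m` makes it nonnegative everywhere and `c_0 = 0`.
  set z := (Icc 1 m : Set ℕ).indicator y
  have hz : ∀ j, 0 ≤ z j := fun j => Set.indicator_nonneg hy0 j
  have hz_zero : z 0 = 0 := Set.indicator_of_notMem (by simp) y
  have hz_mem : ∀ {j}, j ∈ Icc 1 m → z j = y j := fun hj => Set.indicator_of_mem hj y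
  refine ⟨roundedIncrement z, sum_Icc_roundedIncrement_indicator hy0,
    prod_Icc_mul_succ_pow_dvd X (roundedIncrement_eq_zero hz hz_zero) ?_ ?_⟩
  · intro j hj
    obtain ⟨i, rfl⟩ : ∃ i, j = i + 1 := ⟨j - 1, by rw [mem_Icc] at hj; omega⟩
    rw [Nat.add_sub_cancel]
    refine roundedIncrement_add_roundedIncrement_succ_le hz ?_
    rcases i with _ | i
    · simpa [hz_zero, hz_mem hj] using hy1
    · rw [mem_Icc] at hj
      rw [hz_mem (mem_Icc.2 (by omega)), hz_mem (mem_Icc.2 hj)]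
      exact hy2 (i + 2) (mem_Icc.2 (by omega))
  · refine roundedIncrement_le hz ?_
    rcases m.eq_zero_or_pos with rfl | hm
    · simp [hz_zero]
    · rwa [hz_mem (mem_Icc.2 ⟨hm, le_rfl⟩)]

/-- Lemma 4.5(3): let `n = 2r` and `a = (a_1,…,a_n)` nonnegative integers with
`a_{2i-1} ≥ a_{2i}` for `i = 1,…,r`. If `y = (y_1,…,y_{n-1})` are nonnegative reals
with `y_1 ≤ a_1`, `y_{j-1} + y_j ≤ a_j` for `j = 2,…,n-1`, and `y_{n-1} ≤ a_n`, and
`h = ⌈y_1 + ⋯ + y_{n-1}⌉`, then `x^a` is divisible by a product of `h` monomials from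
`{x_1 x_2, …, x_{n-1} x_n}`. -/
theorem divisible_of_even_pair_conditions_short
    (K : Type*) [Field K] (n r : ℕ) (hn : n = 2 * r)
    (a : ℕ → ℕ) (y : ℕ → ℝ)
    (ha : ∀ i ∈ Finset.Icc 1 r, a (2 * i) ≤ a (2 * i - 1))
    (hy0 : ∀ i ∈ Finset.Icc 1 (n - 1), 0 ≤ y i)
    (hy1 : y 1 ≤ (a 1 : ℝ))
    (hy2 : ∀ j ∈ Finset.Icc 2 (n - 1), y (j - 1) + y j ≤ (a j : ℝ))
    (hy3 : y (n - 1) ≤ (a n : ℝ)) :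
    ∃ c : ℕ → ℕ,
      (∑ i ∈ Finset.Icc 1 (n - 1), c i = ⌈∑ i ∈ Finset.Icc 1 (n - 1), y i⌉₊) ∧
      (∏ i ∈ Finset.Icc 1 (n - 1), ((X i * X (i + 1) : MvPolynomial ℕ K) ^ c i)) ∣
        ∏ i ∈ Finset.Icc 1 n, (X i : MvPolynomial ℕ K) ^ a i :=
  divisible_of_even_pair_conditions_short_general K n a y hy0 hy1 hy2 hy3
end
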